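/- arXiv:0801.1987 — 5 statements merged into one kernel-verified Lean document; each statement's English description precedes it below -/
import Mathlib

section
/- Let ε ∈ [0,1), and let x, y ≥ 0 be reals with |x − y| ≤ 1. Then (1+ε)^x (1−ε)^y ≤ 1 + ε(x − y). -/
theorem one_add_rpow_add_mul_one_sub_rpow_le {s t u : ℝ} (hs₁ : -1 < s) (hs₂ : s ≤ 1)
    (ht : 0 ≤ t) (hu₀ : 0 ≤ u) (hu₁ : u ≤ 1) :
    (1 + s) ^ (t + u) * (1 - s) ^ t ≤ 1 + u * s := by
  have hpos : 0 < 1 + s := by linarith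
  calc (1 + s) ^ (t + u) * (1 - s) ^ t = ((1 + s) * (1 - s)) ^ t * (1 + s) ^ u := by
        rw [Real.rpow_add hpos, Real.mul_rpow hpos.le (by linarith)]; ring
    _ ≤ 1 * (1 + s) ^ u := by
        gcongr
        exact Real.rpow_le_one (by nlinarith) (by nlinarith [sq_nonneg s]) ht
    _ ≤ 1 + u * s := by
        rw [one_mul]
        exact rpow_one_add_le_one_add_mul_self hs₁.le hu₀ hu₁

/-- For ε ∈ [0,1) and x, y ≥ 0 with |x−y| ≤ 1: (1+ε)^x (1−ε)^y ≤ 1 + ε(x−y). -/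
theorem rpow_mul_rpow_le (ε : ℝ) (hε0 : 0 ≤ ε) (hε1 : ε < 1)
    (x y : ℝ) (hx : 0 ≤ x) (hy : 0 ≤ y) (hxy : |x - y| ≤ 1) :
    (1 + ε) ^ x * (1 - ε) ^ y ≤ 1 + ε * (x - y) := by
  obtain ⟨hlo, hhi⟩ := abs_le.1 hxy
  rcases le_total y x with hyx | hxy_le
  · have key := one_add_rpow_add_mul_one_sub_rpow_le (u := x - y) (by linarith) hε1.le hy
      (by linarith) hhi
    rwa [add_sub_cancel, mul_comm (x - y)] at key
  -- `ε ↦ -ε` exchanges the roles of `x` and `y`.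
  · have key := one_add_rpow_add_mul_one_sub_rpow_le (s := -ε) (u := y - x) (by linarith)
      (by linarith) hx (by linarith) (by linarith)
    rw [add_sub_cancel, sub_neg_eq_add, ← sub_eq_add_neg, mul_comm] at key
    linarith
end

section
/- Let ε ∈ (0,1), let a, b ≥ 0 be reals, and let C ≥ 1. If (1+ε)^a (1−ε)^b ≤ C, then (1−ε)·a ≤ b + ln(C)/ε. -/
/-!
Taking logarithms, `a log(1+ε) ≤ log C + b (-log(1-ε))`. Multiplying by `1 - ε` and dividing by
`log(1+ε)`, it remains to bound the two coefficients: `ε (1-ε) ≤ log(1+ε)` follows from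
`log x ≥ 1 - 1/x`, and `-(1-ε) log(1-ε) ≤ log(1+ε)` is concavity of `log` at the points
`1/(1-ε)` and `1` with weights `1-ε` and `ε`.
-/

open Real

lemma mul_one_sub_le_log_one_add {ε : ℝ} (hε : 0 ≤ ε) : ε * (1 - ε) ≤ log (1 + ε) :=
  calc ε * (1 - ε) ≤ 1 - (1 + ε)⁻¹ := by
        have hp : 0 < 1 + ε := by linarith
        rw [inv_eq_one_div, one_sub_div hp.ne', add_sub_cancel_left, le_div_iff₀ hp]
        nlinarith [pow_nonneg hε 3]
    _ ≤ log (1 + ε) := one_sub_inv_le_log_of_pos (by positivity)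

lemma neg_one_sub_mul_log_one_sub_le_log_one_add {ε : ℝ} (hε0 : 0 ≤ ε) (hε1 : ε < 1) :
    -((1 - ε) * log (1 - ε)) ≤ log (1 + ε) := by
  have hpos : 0 < 1 - ε := sub_pos.2 hε1
  have hconc := strictConcaveOn_log_Ioi.concaveOn.2 (Set.mem_Ioi.2 (inv_pos.2 hpos))
    (Set.mem_Ioi.2 one_pos) hpos.le hε0 (sub_add_cancel 1 ε)
  simp only [smul_eq_mul, log_inv, log_one, mul_zero, add_zero, mul_one,
    mul_inv_cancel₀ hpos.ne'] at hconc
  linarith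

theorem potential_bound_to_linear_general (ε a b C : ℝ) (hε0 : 0 < ε) (hε1 : ε < 1)
    (hb : 0 ≤ b) (hC : 1 ≤ C)
    (h : (1 + ε) ^ a * (1 - ε) ^ b ≤ C) :
    (1 - ε) * a ≤ b + Real.log C / ε := by
  have hp : 0 < 1 + ε := by linarith
  have hm : 0 < 1 - ε := by linarith
  have hL : 0 < log (1 + ε) := log_pos (by linarith)
  have hlog : a * log (1 + ε) + b * log (1 - ε) ≤ log C := by
    rw [← log_rpow hp, ← log_rpow hm, ← log_mul (by positivity) (by positivity)]
    exact log_le_log (by positivity) h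
  refine le_of_mul_le_mul_right ?_ hL
  calc (1 - ε) * a * log (1 + ε) ≤ (1 - ε) * log C + b * -((1 - ε) * log (1 - ε)) := by
        linarith [mul_le_mul_of_nonneg_left hlog hm.le]
    _ ≤ log (1 + ε) / ε * log C + b * log (1 + ε) := by
        gcongr
        · exact log_nonneg hC
        · rw [le_div_iff₀ hε0, mul_comm]
          exact mul_one_sub_le_log_one_add hε0.le
        · exact neg_one_sub_mul_log_one_sub_le_log_one_add hε0.le hε1
    _ = (b + log C / ε) * log (1 + ε) := by field_simp; ring

/-- If (1+ε)^a (1−ε)^b ≤ C with ε ∈ (0,1), a, b ≥ 0, C ≥ 1,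
then (1−ε)a ≤ b + ln(C)/ε. -/
theorem potential_bound_to_linear (ε a b C : ℝ) (hε0 : 0 < ε) (hε1 : ε < 1)
    (ha : 0 ≤ a) (hb : 0 ≤ b) (hC : 1 ≤ C)
    (h : (1 + ε) ^ a * (1 - ε) ^ b ≤ C) :
    (1 - ε) * a ≤ b + Real.log C / ε :=
  potential_bound_to_linear_general ε a b C hε0 hε1 hb hC h
end

section
/- Let r, c ≥ 1 with rc ≥ 3, let ε ∈ (0,1/2], and let N ≥ 2ln(rc)/ε². Let a_1,…,a_r ≥ 0 and b_1,…,b_c ≥ 0 be reals such that (1+ε)^{a_i} (1−ε)^{b_j} ≤ (rc)² for all i and j, and such that max_i a_i ≥ N. Then (1−2ε)·max_i a_i ≤ min_j b_j. -/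
/-- Key analytic inequality: for `0 < ε ≤ 1/2`,
`ε² + (1 - 2ε)·(-log(1-ε)) ≤ log(1+ε)`. -/
lemma key_log_ineq (ε : ℝ) (h0 : 0 < ε) (h1 : ε ≤ 1/2) :
    ε^2 + (1 - 2*ε) * (-Real.log (1-ε)) ≤ Real.log (1+ε) := by
  have hε1 : |ε| < 1 := by rw [abs_of_pos h0]; linarith
  have hε2 : |(-ε)| < 1 := by rw [abs_neg]; exact hε1
  have h := Real.abs_log_sub_add_sum_range_le hε1 3
  have h' := Real.abs_log_sub_add_sum_range_le hε2 3
  simp [Finset.sum_range_succ, abs_of_pos h0, abs_neg] at h h'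
  rw [abs_le] at h h'
  have hd : ε^4 / (1 - ε) ≤ 2 * ε^4 := by
    rw [div_le_iff₀ (by linarith)]
    nlinarith [pow_pos h0 4]
  nlinarith [h.1, h.2, h'.1, h'.2, pow_pos h0 3, sq_nonneg ε, sq_nonneg (1-2*ε)]

/-- If (1+ε)^{a_i}(1−ε)^{b_j} ≤ (rc)² for all i, j, and max_i a_i ≥ N with
N ≥ 2ln(rc)/ε², then (1−2ε)·max_i a_i ≤ min_j b_j. -/
theorem slow_alg_approx_guarantee (r c : ℕ) (hr : 1 ≤ r) (hc : 1 ≤ c)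
    (hrc : 3 ≤ r * c)
    (ε : ℝ) (hε0 : 0 < ε) (hε1 : ε ≤ 1 / 2)
    (N : ℝ) (hN : 2 * Real.log (r * c) / ε ^ 2 ≤ N)
    (a : Fin r → ℝ) (b : Fin c → ℝ) (ha : ∀ i, 0 ≤ a i) (hb : ∀ j, 0 ≤ b j)
    (hner : (Finset.univ : Finset (Fin r)).Nonempty)
    (hnec : (Finset.univ : Finset (Fin c)).Nonempty)
    (hbound : ∀ i j, (1 + ε) ^ (a i) * (1 - ε) ^ (b j) ≤ ((r : ℝ) * c) ^ 2)
    (hmax : N ≤ Finset.univ.sup' hner a) :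
    (1 - 2 * ε) * Finset.univ.sup' hner a ≤ Finset.univ.inf' hnec b := by
  obtain ⟨i₀, -, hi₀⟩ := Finset.exists_mem_eq_sup' hner a
  obtain ⟨j₀, -, hj₀⟩ := Finset.exists_mem_eq_inf' hnec b
  rw [hi₀, hj₀]
  set A := a i₀ with hA
  set B := b j₀ with hB
  have hA0 : 0 ≤ A := ha i₀
  have hB0 : 0 ≤ B := hb j₀
  have hAN : N ≤ A := hi₀ ▸ hmax
  -- positivity facts
  have h1p : (0:ℝ) < 1 + ε := by linarith
  have h1m : (0:ℝ) < 1 - ε := by linarith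
  have hrc1 : (1:ℝ) ≤ (r : ℝ) * c := by
    have : (3:ℝ) ≤ (r : ℝ) * c := by exact_mod_cast hrc
    linarith
  have hrcpos : (0:ℝ) < (r : ℝ) * c := by linarith
  -- take logs of the bound
  have hb' := hbound i₀ j₀
  have hlhs_pos : (0:ℝ) < (1 + ε) ^ A * (1 - ε) ^ B :=
    mul_pos (Real.rpow_pos_of_pos h1p A) (Real.rpow_pos_of_pos h1m B)
  have hlog := Real.log_le_log hlhs_pos hb'
  rw [Real.log_mul (ne_of_gt (Real.rpow_pos_of_pos h1p A))
      (ne_of_gt (Real.rpow_pos_of_pos h1m B)),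
    Real.log_rpow h1p, Real.log_rpow h1m, Real.log_pow] at hlog
  -- hlog : A * log(1+ε) + B * log(1-ε) ≤ 2 * log (r*c)
  push_cast at hlog
  have hεsq : (0:ℝ) < ε ^ 2 := by positivity
  have hNA : 2 * Real.log ((r : ℝ) * c) ≤ ε ^ 2 * A := by
    have h2 : 2 * Real.log ((r : ℝ) * c) / ε ^ 2 ≤ A := le_trans hN hAN
    calc 2 * Real.log ((r : ℝ) * c)
        = (2 * Real.log ((r : ℝ) * c) / ε ^ 2) * ε ^ 2 := by field_simp
      _ ≤ A * ε ^ 2 := by exact mul_le_mul_of_nonneg_right h2 (le_of_lt hεsq)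
      _ = ε ^ 2 * A := by ring
  have hLneg : Real.log (1 - ε) < 0 := Real.log_neg h1m (by linarith)
  set L : ℝ := -Real.log (1 - ε) with hL
  have hLpos : 0 < L := by simp [hL]; linarith
  have hkey := key_log_ineq ε hε0 hε1
  have hkeyA : A * (ε^2 + (1 - 2*ε) * L) ≤ A * Real.log (1 + ε) :=
    mul_le_mul_of_nonneg_left hkey hA0
  -- combine: (1-2ε)*A*L ≤ B*L
  have he1 : A * (ε ^ 2 + (1 - 2 * ε) * L) = ε ^ 2 * A + (1 - 2 * ε) * A * L := by ring
  have he2 : B * Real.log (1 - ε) = -(B * L) := by rw [hL]; ring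
  have hfin : (1 - 2*ε) * A * L ≤ B * L := by linarith [hlog, hNA, hkeyA, he1, he2]
  exact le_of_mul_le_mul_right (by linarith) hLpos
end

section
/- Let p ∈ ℝ^r, û ∈ ℝ^r, p̂ ∈ ℝ^c, u ∈ ℝ^c be vectors with nonnegative entries, and write (p×û)_i = p_i û_i and (p̂×u)_j = p̂_j u_j. Suppose |p| > 0, |p̂| > 0, |p×û| > 0, and |p̂×u| > 0, and let w = |p×û|·|p̂| / (|p×û|·|p̂| + |p|·|p̂×u|). Then for every pair of indices (i,j): w·(p_i û_i/|p×û|)·(p̂_j/|p̂|) + (1−w)·(p_i/|p|)·(p̂_j u_j/|p̂×u|) = p_i p̂_j (û_i + u_j) / Σ_{k,l} p_k p̂_l (û_k + u_l). In particular, the probability that the subroutine random-pair returns (i,j) is proportional to p_i p̂_j (û_i + u_j). -/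
/-- The subroutine random-pair returns (i,j) with probability proportional to
p_i p̂_j (û_i + u_j). -/
theorem random_pair_probability (r c : ℕ)
    (p uh : Fin r → ℝ) (ph u : Fin c → ℝ)
    (hp : ∀ i, 0 ≤ p i) (huh : ∀ i, 0 ≤ uh i)
    (hph : ∀ j, 0 ≤ ph j) (hu : ∀ j, 0 ≤ u j)
    (hP : 0 < ∑ i, p i) (hPh : 0 < ∑ j, ph j)
    (hPu : 0 < ∑ i, p i * uh i) (hPhu : 0 < ∑ j, ph j * u j)
    (w : ℝ)
    (hw : w = (∑ i, p i * uh i) * (∑ j, ph j) /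
      ((∑ i, p i * uh i) * (∑ j, ph j) + (∑ i, p i) * (∑ j, ph j * u j))) :
    ∀ (i : Fin r) (j : Fin c),
      w * (p i * uh i / ∑ k, p k * uh k) * (ph j / ∑ l, ph l) +
        (1 - w) * (p i / ∑ k, p k) * (ph j * u j / ∑ l, ph l * u l) =
      p i * ph j * (uh i + u j) / ∑ k, ∑ l, p k * ph l * (uh k + u l) := by
  intro i j
  have key : (∑ k, ∑ l, p k * ph l * (uh k + u l)) =
      (∑ i, p i * uh i) * (∑ j, ph j) + (∑ i, p i) * (∑ j, ph j * u j) := by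
    rw [Finset.sum_mul_sum, Finset.sum_mul_sum, ← Finset.sum_add_distrib]
    refine Finset.sum_congr rfl fun k _ => ?_
    rw [← Finset.sum_add_distrib]
    refine Finset.sum_congr rfl fun l _ => ?_
    ring
  have hden : (0:ℝ) < (∑ i, p i * uh i) * (∑ j, ph j) + (∑ i, p i) * (∑ j, ph j * u j) := by
    positivity
  rw [key, hw]
  field_simp
  ring
end

section
/- (Chernoff bound for random stopping times.) Let (Ω, F, P) be a probability space with a filtration (F_t)_{t≥1}, and let (x_t)_{t≥1} and (y_t)_{t≥1} be sequences of nonnegative integrable real random variables adapted to the filtration. Let T be a stopping time with finite expectation, and set X = Σ_{t=1}^T x_t and Y = Σ_{t=1}^T y_t. Suppose that for every t ≥ 1, almost surely: |x_t − y_t| ≤ 1 and E[x_t − y_t | F_{t−1}] ≤ 0. Then for every ε ∈ [0,1] and every A ∈ ℝ: P[(1−ε)X ≥ Y + A] ≤ exp(−εA). -/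
/-!
The potential `π_t = ∏_{s ≤ t} (1 + ε) ^ x_s (1 - ε) ^ y_s` is a nonnegative supermartingale: as
`|x_t - y_t| ≤ 1`, Bernoulli's inequality gives `(1 + ε) ^ x_t (1 - ε) ^ y_t ≤ 1 + ε (x_t - y_t)`,
whose conditional mean given `F_{t-1}` is at most `1`. Optional stopping at the bounded times
`T ∧ n` and Fatou's lemma (in place of Wald's equation) give `E[π_T] ≤ 1`. On the event
`(1 - ε) X ≥ Y + A` one has `π_T ≥ exp (ε A)`, because `(1 + ε) (1 - ε) ^ (1 - ε) ≥ 1` and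
`log (1 - ε) ≤ -ε`, and Markov's inequality concludes.
-/

open MeasureTheory Finset Filter

namespace Real

theorem exp_mul_log_one_add_le {s d : ℝ} (hs : -1 < s) (hd₀ : 0 ≤ d) (hd₁ : d ≤ 1) :
    exp (d * log (1 + s)) ≤ 1 + d * s := by
  rw [mul_comm, ← rpow_def_of_pos (by linarith)]
  exact rpow_one_add_le_one_add_mul_self hs.le hd₀ hd₁

theorem exp_log_one_add_mul_add_log_one_sub_mul_le {ε x y : ℝ} (hε₀ : 0 ≤ ε) (hε₁ : ε < 1)
    (hx : 0 ≤ x) (hy : 0 ≤ y) (hxy : |x - y| ≤ 1) :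
    exp (log (1 + ε) * x + log (1 - ε) * y) ≤ 1 + ε * (x - y) := by
  have hsum : log (1 + ε) + log (1 - ε) ≤ 0 := by
    rw [← log_mul (by linarith) (by linarith)]
    exact log_nonpos (by nlinarith) (by nlinarith)
  obtain ⟨hyx, hxy⟩ := abs_le.1 hxy
  rcases le_total y x with h | h
  · calc exp (log (1 + ε) * x + log (1 - ε) * y)
        ≤ exp ((x - y) * log (1 + ε)) := exp_le_exp.2 (by nlinarith)
      _ ≤ 1 + (x - y) * ε := exp_mul_log_one_add_le (by linarith) (by linarith) hxy
      _ = 1 + ε * (x - y) := by ring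
  · calc exp (log (1 + ε) * x + log (1 - ε) * y)
        ≤ exp ((y - x) * log (1 + -ε)) := exp_le_exp.2 (by rw [← sub_eq_add_neg]; nlinarith)
      _ ≤ 1 + (y - x) * -ε := exp_mul_log_one_add_le (by linarith) (by linarith) (by linarith)
      _ = 1 + ε * (x - y) := by ring

theorem log_one_add_add_mul_log_one_sub_nonneg {ε : ℝ} (hε₀ : 0 ≤ ε) (hε₁ : ε < 1) :
    0 ≤ log (1 + ε) + (1 - ε) * log (1 - ε) := by
  have hε : 0 < 1 - ε := by linarith
  -- Bernoulli with base `1 + ε / (1 - ε) = (1 - ε)⁻¹` and exponent `1 - ε`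
  have h := exp_mul_log_one_add_le (s := ε / (1 - ε)) (d := 1 - ε)
    (by linarith [div_nonneg hε₀ hε.le]) hε.le (by linarith)
  rw [show 1 + ε / (1 - ε) = (1 - ε)⁻¹ by field_simp; ring, log_inv,
    mul_div_cancel₀ _ hε.ne', ← le_log_iff_exp_le (by linarith)] at h
  linarith

theorem exp_mul_le_exp_log_one_add_mul_add_log_one_sub_mul {ε A X Y : ℝ} (hε₀ : 0 ≤ ε)
    (hε₁ : ε < 1) (hA : 0 ≤ A) (hX : 0 ≤ X) (h : Y + A ≤ (1 - ε) * X) :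
    exp (ε * A) ≤ exp (log (1 + ε) * X + log (1 - ε) * Y) := by
  have hb : log (1 - ε) ≤ -ε := by linarith [log_le_sub_one_of_pos (x := 1 - ε) (by linarith)]
  have hcoeff := log_one_add_add_mul_log_one_sub_nonneg hε₀ hε₁
  refine exp_le_exp.2 ?_
  linarith [mul_nonneg hcoeff hX, mul_le_mul_of_nonpos_left h (hb.trans (by linarith : -ε ≤ 0)),
    mul_le_mul_of_nonneg_right hb hA]

end Real

section

variable {Ω : Type*} {m₀ : MeasurableSpace Ω} {μ : Measure Ω}

theorem meas_exp_le_le_ofReal_exp_neg {Z : Ω → ℝ} (hZ : AEMeasurable Z μ)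
    (hZ_lintegral : ∫⁻ ω, ENNReal.ofReal (Z ω) ∂μ ≤ 1) (c : ℝ) :
    μ {ω | Real.exp c ≤ Z ω} ≤ ENNReal.ofReal (Real.exp (-c)) := by
  calc μ {ω | Real.exp c ≤ Z ω}
      ≤ μ {ω | ENNReal.ofReal (Real.exp c) ≤ ENNReal.ofReal (Z ω)} :=
        measure_mono fun ω hω => ENNReal.ofReal_le_ofReal hω
    _ ≤ (∫⁻ ω, ENNReal.ofReal (Z ω) ∂μ) / ENNReal.ofReal (Real.exp c) :=
        meas_ge_le_lintegral_div hZ.ennreal_ofReal (by simp [Real.exp_pos]) ENNReal.ofReal_ne_top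
    _ ≤ 1 / ENNReal.ofReal (Real.exp c) := by gcongr
    _ = ENNReal.ofReal (Real.exp (-c)) := by
        rw [one_div, ← ENNReal.ofReal_inv_of_pos (Real.exp_pos _), Real.exp_neg]

variable [IsFiniteMeasure μ]

theorem condExp_le_one_of_le_one_add_smul {m : MeasurableSpace Ω} (hm : m ≤ m₀) {g h : Ω → ℝ}
    {ε : ℝ} (hε : 0 ≤ ε) (hg : Integrable g μ) (hh : Integrable h μ)
    (hgh : g ≤ᵐ[μ] 1 + ε • h) (hh_condExp : μ[h|m] ≤ᵐ[μ] 0) : μ[g|m] ≤ᵐ[μ] 1 := by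
  have hlin : μ[1 + ε • h|m] =ᵐ[μ] 1 + ε • μ[h|m] := by
    filter_upwards [condExp_add (integrable_const 1) (hh.smul ε) m, condExp_smul ε h m]
      with ω hadd hsmul
    refine hadd.trans ?_
    rw [Pi.add_apply, hsmul, condExp_const hm]
    rfl
  filter_upwards [condExp_mono hg ((integrable_const 1).add (hh.smul ε)) hgh, hlin, hh_condExp]
    with ω hmono hlin hneg
  calc μ[g|m] ω ≤ 1 + ε * μ[h|m] ω := hmono.trans_eq hlin
    _ ≤ 1 := by linarith [mul_nonpos_of_nonneg_of_nonpos hε hneg]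

variable {F : Filtration ℕ m₀}

theorem supermartingale_prod_Icc {g : ℕ → Ω → ℝ} {C : ℝ}
    (hg_meas : ∀ t, 1 ≤ t → StronglyMeasurable[F t] (g t))
    (hg_nonneg : ∀ t, 1 ≤ t → 0 ≤ᵐ[μ] g t) (hg_bdd : ∀ t, 1 ≤ t → ∀ᵐ ω ∂μ, ‖g t ω‖ ≤ C)
    (hg_condExp : ∀ t, 1 ≤ t → μ[g t|F (t - 1)] ≤ᵐ[μ] 1) :
    Supermartingale (fun t ω => ∏ s ∈ Icc 1 t, g s ω) F μ := by
  set f : ℕ → Ω → ℝ := fun t ω => ∏ s ∈ Icc 1 t, g s ω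
  have hf_succ : ∀ t, f (t + 1) = f t * g (t + 1) := fun t => by
    ext ω; exact prod_Icc_succ_top (by omega) _
  have hf_meas : StronglyAdapted F f := fun t =>
    Finset.stronglyMeasurable_fun_prod _ fun s hs =>
      (hg_meas s (mem_Icc.1 hs).1).mono (F.mono (mem_Icc.1 hs).2)
  have hf_int : ∀ t, Integrable (f t) μ := by
    intro t
    induction t with
    | zero => simp [f]
    | succ t ih =>
      rw [hf_succ]
      exact ih.mul_bdd ((hg_meas (t + 1) (by omega)).mono (F.le _)).aestronglyMeasurable
        (hg_bdd (t + 1) (by omega))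
  have hf_nonneg : ∀ t, 0 ≤ᵐ[μ] f t := fun t => by
    filter_upwards [ae_all_iff.2 fun s => Filter.eventually_imp_distrib_left.2 (hg_nonneg s)]
      with ω hω
    exact prod_nonneg fun s hs => hω s (mem_Icc.1 hs).1
  refine supermartingale_nat hf_meas hf_int fun t => ?_
  have hg_int : Integrable (g (t + 1)) μ :=
    (integrable_const C).mono' ((hg_meas (t + 1) (by omega)).mono (F.le _)).aestronglyMeasurable
      (hg_bdd (t + 1) (by omega))
  rw [hf_succ]
  filter_upwards [condExp_mul_of_stronglyMeasurable_left (hf_meas t) (hf_succ t ▸ hf_int (t + 1))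
    hg_int, hg_condExp (t + 1) (by omega), hf_nonneg t] with ω hmul hle hf₀
  rw [hmul]
  exact mul_le_of_le_one_right hf₀ hle

theorem MeasureTheory.Supermartingale.lintegral_ofReal_stopped_le {f : ℕ → Ω → ℝ}
    (hf : Supermartingale f F μ) (hf_nonneg : ∀ t, 0 ≤ᵐ[μ] f t) {T : Ω → ℕ}
    (hT : IsStoppingTime F fun ω => (T ω : WithTop ℕ)) :
    ∫⁻ ω, ENNReal.ofReal (f (T ω) ω) ∂μ ≤ ENNReal.ofReal (∫ ω, f 0 ω ∂μ) := by
  have hTn : ∀ n : ℕ, IsStoppingTime F fun ω => ((min (T ω) n : ℕ) : WithTop ℕ) :=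
    hT.min_const
  have hint : ∀ n, Integrable (fun ω => f (min (T ω) n) ω) μ := fun n =>
    integrable_stoppedValue ℕ (hTn n) hf.integrable fun _ => WithTop.coe_le_coe.2 (min_le_right _ _)
  have hbdd : ∀ n, ∫⁻ ω, ENNReal.ofReal (f (min (T ω) n) ω) ∂μ
      ≤ ENNReal.ofReal (∫ ω, f 0 ω ∂μ) := by
    intro n
    rw [← ofReal_integral_eq_lintegral_ofReal (hint n)]
    · refine ENNReal.ofReal_le_ofReal ?_
      have := hf.neg.expected_stoppedValue_mono (isStoppingTime_const F 0) (hTn n)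
        (fun _ => WithTop.coe_le_coe.2 (Nat.zero_le _))
        (fun _ => WithTop.coe_le_coe.2 (min_le_right _ n))
      change ∫ ω, -f 0 ω ∂μ ≤ ∫ ω, -f (min (T ω) n) ω ∂μ at this
      rwa [integral_neg, integral_neg, neg_le_neg_iff] at this
    · filter_upwards [ae_all_iff.2 hf_nonneg] with ω hω using hω _
  calc ∫⁻ ω, ENNReal.ofReal (f (T ω) ω) ∂μ
      = ∫⁻ ω, liminf (fun n : ℕ => ENNReal.ofReal (f (min (T ω) n) ω)) atTop ∂μ := by
        congr with ω
        refine (tendsto_atTop_of_eventually_const (i₀ := T ω) fun n hn => ?_).liminf_eq.symm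
        rw [min_eq_left hn]
    _ ≤ liminf (fun n : ℕ => ∫⁻ ω, ENNReal.ofReal (f (min (T ω) n) ω) ∂μ) atTop :=
        lintegral_liminf_le' fun n => (hint n).aemeasurable.ennreal_ofReal
    _ ≤ ENNReal.ofReal (∫ ω, f 0 ω ∂μ) := liminf_le_of_frequently_le' (.of_forall hbdd)

/-- The potential `π_t = ∏_{s ≤ t} (1 + ε) ^ x_s (1 - ε) ^ y_s`, written through `exp` and `log`
(the two agree for `ε < 1`). -/
noncomputable def chernoffPotential (ε : ℝ) (x y : ℕ → Ω → ℝ) (t : ℕ) (ω : Ω) : ℝ :=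
  ∏ s ∈ Icc 1 t, Real.exp (Real.log (1 + ε) * x s ω + Real.log (1 - ε) * y s ω)

theorem chernoffPotential_eq_exp (ε : ℝ) (x y : ℕ → Ω → ℝ) (t : ℕ) (ω : Ω) :
    chernoffPotential ε x y t ω = Real.exp (Real.log (1 + ε) * ∑ s ∈ Icc 1 t, x s ω
      + Real.log (1 - ε) * ∑ s ∈ Icc 1 t, y s ω) := by
  rw [chernoffPotential, ← Real.exp_sum, sum_add_distrib, mul_sum, mul_sum]

theorem chernoffPotential_zero (ε : ℝ) (x y : ℕ → Ω → ℝ) (ω : Ω) :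
    chernoffPotential ε x y 0 ω = 1 := by
  simp [chernoffPotential]

theorem chernoffPotential_nonneg (ε : ℝ) (x y : ℕ → Ω → ℝ) (t : ℕ) (ω : Ω) :
    0 ≤ chernoffPotential ε x y t ω :=
  prod_nonneg fun _ _ => (Real.exp_pos _).le

theorem supermartingale_chernoffPotential {x y : ℕ → Ω → ℝ} {ε : ℝ} (hε₀ : 0 ≤ ε) (hε₁ : ε < 1)
    (hx_meas : ∀ t, 1 ≤ t → StronglyMeasurable[F t] (x t))
    (hy_meas : ∀ t, 1 ≤ t → StronglyMeasurable[F t] (y t))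
    (hx_nonneg : ∀ t, 1 ≤ t → ∀ᵐ ω ∂μ, 0 ≤ x t ω) (hy_nonneg : ∀ t, 1 ≤ t → ∀ᵐ ω ∂μ, 0 ≤ y t ω)
    (hxy : ∀ t, 1 ≤ t → ∀ᵐ ω ∂μ, |x t ω - y t ω| ≤ 1)
    (hxy_condExp : ∀ t, 1 ≤ t → μ[x t - y t|F (t - 1)] ≤ᵐ[μ] 0) :
    Supermartingale (chernoffPotential ε x y) F μ := by
  have hle : ∀ t, 1 ≤ t → ∀ᵐ ω ∂μ,
      Real.exp (Real.log (1 + ε) * x t ω + Real.log (1 - ε) * y t ω) ≤ 1 + ε * (x t ω - y t ω) :=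
    fun t ht => by
      filter_upwards [hx_nonneg t ht, hy_nonneg t ht, hxy t ht] with ω hx hy hxy
      exact Real.exp_log_one_add_mul_add_log_one_sub_mul_le hε₀ hε₁ hx hy hxy
  have hmeas : ∀ t, 1 ≤ t → StronglyMeasurable[F t]
      fun ω => Real.exp (Real.log (1 + ε) * x t ω + Real.log (1 - ε) * y t ω) := fun t ht =>
    Real.continuous_exp.comp_stronglyMeasurable
      (((hx_meas t ht).const_mul _).add ((hy_meas t ht).const_mul _))
  have hbdd : ∀ t, 1 ≤ t → ∀ᵐ ω ∂μ,
      ‖Real.exp (Real.log (1 + ε) * x t ω + Real.log (1 - ε) * y t ω)‖ ≤ 2 := fun t ht => by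
    filter_upwards [hle t ht, hxy t ht] with ω hle hxy
    rw [Real.norm_of_nonneg (Real.exp_pos _).le]
    nlinarith [(abs_le.1 hxy).2]
  refine supermartingale_prod_Icc hmeas (fun t _ => ae_of_all _ fun ω => (Real.exp_pos _).le) hbdd
    fun t ht => condExp_le_one_of_le_one_add_smul (F.le _) hε₀ ?_ ?_ (hle t ht)
      (hxy_condExp t ht)
  · exact .of_bound ((hmeas t ht).mono (F.le t)).aestronglyMeasurable 2 (hbdd t ht)
  · exact .of_bound (((hx_meas t ht).sub (hy_meas t ht)).mono (F.le t)).aestronglyMeasurable 1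
      (hxy t ht)

end

theorem chernoff_random_stopping_time_general
    {Ω : Type*} {m : MeasurableSpace Ω} {P : Measure Ω} [IsProbabilityMeasure P]
    (F : Filtration ℕ m) (x y : ℕ → Ω → ℝ)
    (hxmeas : ∀ t : ℕ, 1 ≤ t → StronglyMeasurable[F t] (x t))
    (hymeas : ∀ t : ℕ, 1 ≤ t → StronglyMeasurable[F t] (y t))
    (hxpos : ∀ t : ℕ, 1 ≤ t → ∀ᵐ ω ∂P, 0 ≤ x t ω)
    (hypos : ∀ t : ℕ, 1 ≤ t → ∀ᵐ ω ∂P, 0 ≤ y t ω)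
    (hdiff : ∀ t : ℕ, 1 ≤ t → ∀ᵐ ω ∂P, |x t ω - y t ω| ≤ 1)
    (hcond : ∀ t : ℕ, 1 ≤ t → ∀ᵐ ω ∂P, (P[x t - y t|F (t - 1)]) ω ≤ 0)
    (T : Ω → ℕ) (hT : IsStoppingTime F (fun ω => (T ω : WithTop ℕ)))
    (ε : ℝ) (hε0 : 0 ≤ ε) (hε1 : ε ≤ 1) (A : ℝ) :
    P {ω | (∑ t ∈ Finset.Icc 1 (T ω), y t ω) + A ≤
        (1 - ε) * ∑ t ∈ Finset.Icc 1 (T ω), x t ω} ≤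
      ENNReal.ofReal (Real.exp (-ε * A)) := by
  rcases le_or_gt A 0 with hA | hA
  · exact prob_le_one.trans (ENNReal.one_le_ofReal.2 (Real.one_le_exp (by nlinarith)))
  obtain hε1 | rfl := hε1.lt_or_eq
  swap
  · refine (measure_eq_zero_iff_ae_notMem.2 ?_).trans_le zero_le
    filter_upwards [ae_all_iff.2 fun t => eventually_imp_distrib_left.2 (hypos t)] with ω hy hω
    have hY : 0 ≤ ∑ t ∈ Icc 1 (T ω), y t ω := sum_nonneg fun t ht => hy t (mem_Icc.1 ht).1
    simp only [sub_self, zero_mul] at hω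
    linarith
  have hπ := supermartingale_chernoffPotential hε0 hε1 hxmeas hymeas hxpos hypos hdiff hcond
  have hπT : ∫⁻ ω, ENNReal.ofReal (chernoffPotential ε x y (T ω) ω) ∂P ≤ 1 := by
    simpa [chernoffPotential_zero] using
      hπ.lintegral_ofReal_stopped_le (fun t => ae_of_all _ (chernoffPotential_nonneg ε x y t)) hT
  have hπT_meas : Measurable fun ω => chernoffPotential ε x y (T ω) ω :=
    (measurable_stoppedValue hπ.stronglyAdapted.isStronglyProgressive_of_discrete hT).mono
      hT.measurableSpace_le le_rfl
  rw [neg_mul]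
  refine (measure_mono_ae ?_).trans (meas_exp_le_le_ofReal_exp_neg hπT_meas.aemeasurable hπT _)
  filter_upwards [ae_all_iff.2 fun t => eventually_imp_distrib_left.2 (hxpos t)] with ω hx hω
  change Real.exp (ε * A) ≤ chernoffPotential ε x y (T ω) ω
  rw [chernoffPotential_eq_exp]
  exact Real.exp_mul_le_exp_log_one_add_mul_add_log_one_sub_mul hε0 hε1 hA.le
    (sum_nonneg fun t ht => hx t (mem_Icc.1 ht).1) hω

/-- Chernoff bound for random stopping times: if the nonnegative adapted sequences
(x_t), (y_t) satisfy |x_t − y_t| ≤ 1 and E[x_t − y_t | F_{t−1}] ≤ 0 a.s., and T is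
a stopping time with finite expectation, then for the stopped sums X = Σ_{t=1}^T x_t
and Y = Σ_{t=1}^T y_t, P[(1−ε)X ≥ Y + A] ≤ exp(−εA) for every ε ∈ [0,1], A ∈ ℝ. -/
theorem chernoff_random_stopping_time
    {Ω : Type*} {m : MeasurableSpace Ω} {P : Measure Ω} [IsProbabilityMeasure P]
    (F : Filtration ℕ m) (x y : ℕ → Ω → ℝ)
    (hxmeas : ∀ t : ℕ, 1 ≤ t → StronglyMeasurable[F t] (x t))
    (hymeas : ∀ t : ℕ, 1 ≤ t → StronglyMeasurable[F t] (y t))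
    (hxint : ∀ t : ℕ, 1 ≤ t → Integrable (x t) P)
    (hyint : ∀ t : ℕ, 1 ≤ t → Integrable (y t) P)
    (hxpos : ∀ t : ℕ, 1 ≤ t → ∀ᵐ ω ∂P, 0 ≤ x t ω)
    (hypos : ∀ t : ℕ, 1 ≤ t → ∀ᵐ ω ∂P, 0 ≤ y t ω)
    (hdiff : ∀ t : ℕ, 1 ≤ t → ∀ᵐ ω ∂P, |x t ω - y t ω| ≤ 1)
    (hcond : ∀ t : ℕ, 1 ≤ t → ∀ᵐ ω ∂P, (P[x t - y t|F (t - 1)]) ω ≤ 0)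
    (T : Ω → ℕ) (hT : IsStoppingTime F (fun ω => (T ω : WithTop ℕ)))
    (hTint : Integrable (fun ω => (T ω : ℝ)) P)
    (ε : ℝ) (hε0 : 0 ≤ ε) (hε1 : ε ≤ 1) (A : ℝ) :
    P {ω | (∑ t ∈ Finset.Icc 1 (T ω), y t ω) + A ≤
        (1 - ε) * ∑ t ∈ Finset.Icc 1 (T ω), x t ω} ≤
      ENNReal.ofReal (Real.exp (-ε * A)) :=
  chernoff_random_stopping_time_general F x y hxmeas hymeas hxpos hypos hdiff hcond T hT ε hε0 hε1 A
end
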